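/- For any finite sequence of square row-stochastic matrices Q[1],...,Q[p] of the same size, delta(Q[1] Q[2] ... Q[p]) <= product_{k=1}^p lambda(Q[k]). -/

import Mathlib

/-!
Write `(A * B) i₁ j - (A * B) i₂ j = ∑ k, (u k - v k) * B k j` for the rows `u = A i₁`, `v = A i₂`.
Removing the common mass `min (u k) (v k)` from both rows leaves two nonnegative vectors of equal
total mass `1 - ∑ k, min (u k) (v k) ≤ λ(A)`, so the difference is at most that mass times the
oscillation `max_k B k j - min_k B k j ≤ δ(B)` of the `j`-th column. Hence `δ(A * B) ≤ λ(A) δ(B)`,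
and induction along the product, starting from `δ(1) ≤ 1`, gives the theorem.
-/

open Finset Matrix

noncomputable def ergDelta {m : ℕ} (A : Matrix (Fin m) (Fin m) ℝ) : ℝ :=
  ⨆ j, ⨆ i1, ⨆ i2, |A i1 j - A i2 j|

noncomputable def ergLambda {m : ℕ} (A : Matrix (Fin m) (Fin m) ℝ) : ℝ :=
  1 - ⨅ i1, ⨅ i2, ∑ j, min (A i1 j) (A i2 j)

def RowStochastic {m : ℕ} (A : Matrix (Fin m) (Fin m) ℝ) : Prop :=
  (∀ i j, 0 ≤ A i j) ∧ ∀ i, ∑ j, A i j = 1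

theorem sum_mul_sub_sum_mul_le_of_sum_eq {ι : Type*} [Fintype ι] {u v b : ι → ℝ} {lo hi : ℝ}
    (hu : ∀ k, 0 ≤ u k) (hv : ∀ k, 0 ≤ v k) (huv : ∑ k, u k = ∑ k, v k)
    (hlo : ∀ k, lo ≤ b k) (hhi : ∀ k, b k ≤ hi) :
    ∑ k, u k * b k - ∑ k, v k * b k ≤ (∑ k, u k) * (hi - lo) := by
  have hupper : ∑ k, u k * b k ≤ (∑ k, u k) * hi := by
    rw [sum_mul]
    exact sum_le_sum fun k _ => mul_le_mul_of_nonneg_left (hhi k) (hu k)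
  have hlower : (∑ k, v k) * lo ≤ ∑ k, v k * b k := by
    rw [sum_mul]
    exact sum_le_sum fun k _ => mul_le_mul_of_nonneg_left (hlo k) (hv k)
  rw [← huv] at hlower
  linarith

section

variable {m : ℕ}

theorem le_ergDelta (A : Matrix (Fin m) (Fin m) ℝ) (j i1 i2 : Fin m) :
    |A i1 j - A i2 j| ≤ ergDelta A :=
  le_ciSup_of_le (Finite.bddAbove_range _) j <|
    le_ciSup_of_le (Finite.bddAbove_range _) i1 <| le_ciSup (Finite.bddAbove_range fun i => |A i1 j - A i j|) i2

theorem ergDelta_le {A : Matrix (Fin m) (Fin m) ℝ} {c : ℝ}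
    (h : ∀ j i1 i2, |A i1 j - A i2 j| ≤ c) (hc : 0 ≤ c) : ergDelta A ≤ c :=
  Real.iSup_le (fun j => Real.iSup_le (fun i1 => Real.iSup_le (h j i1) hc) hc) hc

theorem ergDelta_nonneg (A : Matrix (Fin m) (Fin m) ℝ) : 0 ≤ ergDelta A :=
  Real.iSup_nonneg fun _ => Real.iSup_nonneg fun _ => Real.iSup_nonneg fun _ => abs_nonneg _

theorem one_sub_sum_min_le_ergLambda (A : Matrix (Fin m) (Fin m) ℝ) (i1 i2 : Fin m) :
    1 - ∑ j, min (A i1 j) (A i2 j) ≤ ergLambda A :=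
  sub_le_sub_left
    (ciInf_le_of_le (Finite.bddBelow_range _) i1 (ciInf_le (Finite.bddBelow_range _) i2)) 1

theorem rowStochastic_one : RowStochastic (1 : Matrix (Fin m) (Fin m) ℝ) :=
  ⟨fun i j => by rw [one_apply]; positivity, fun i => by simp [one_apply]⟩

namespace RowStochastic

variable {A : Matrix (Fin m) (Fin m) ℝ}

theorem le_one (hA : RowStochastic A) (i j : Fin m) : A i j ≤ 1 :=
  hA.2 i ▸ single_le_sum (fun k _ => hA.1 i k) (mem_univ j)

theorem ergDelta_le_one (hA : RowStochastic A) : ergDelta A ≤ 1 :=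
  ergDelta_le (fun j i1 i2 =>
    abs_sub_le_of_nonneg_of_le (hA.1 i1 j) (hA.le_one i1 j) (hA.1 i2 j) (hA.le_one i2 j))
    zero_le_one

theorem ergLambda_nonneg (hA : RowStochastic A) : 0 ≤ ergLambda A := by
  rcases isEmpty_or_nonempty (Fin m) with hm | ⟨⟨i⟩⟩
  · simp [ergLambda]
  · simpa [hA.2 i] using one_sub_sum_min_le_ergLambda A i i

theorem ergDelta_mul_le (hA : RowStochastic A) (B : Matrix (Fin m) (Fin m) ℝ) :
    ergDelta (A * B) ≤ ergLambda A * ergDelta B := by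
  refine ergDelta_le (fun j i1 i2 => ?_) (mul_nonneg hA.ergLambda_nonneg (ergDelta_nonneg B))
  suffices h : ∀ i1 i2, (A * B) i1 j - (A * B) i2 j ≤ ergLambda A * ergDelta B from
    abs_sub_le_iff.2 ⟨h i1 i2, h i2 i1⟩
  intro i1 i2
  have : Nonempty (Fin m) := ⟨j⟩
  obtain ⟨kmax, hmax⟩ := Finite.exists_max fun k => B k j
  obtain ⟨kmin, hmin⟩ := Finite.exists_min fun k => B k j
  set c := fun k => min (A i1 k) (A i2 k)
  have hdiff : (A * B) i1 j - (A * B) i2 j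
      = ∑ k, (A i1 k - c k) * B k j - ∑ k, (A i2 k - c k) * B k j := by
    simp only [mul_apply, ← sum_sub_distrib]
    exact sum_congr rfl fun k _ => by ring
  have hmass (i : Fin m) : ∑ k, (A i k - c k) = 1 - ∑ k, c k := by
    rw [sum_sub_distrib, hA.2 i]
  calc (A * B) i1 j - (A * B) i2 j
      ≤ (∑ k, (A i1 k - c k)) * (B kmax j - B kmin j) := hdiff ▸
        sum_mul_sub_sum_mul_le_of_sum_eq (fun k => sub_nonneg.2 (min_le_left _ _))
          (fun k => sub_nonneg.2 (min_le_right _ _)) ((hmass i1).trans (hmass i2).symm) hmin hmax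
    _ ≤ ergLambda A * ergDelta B :=
        mul_le_mul (hmass i1 ▸ one_sub_sum_min_le_ergLambda A i1 i2)
          ((le_abs_self _).trans (le_ergDelta B j kmax kmin)) (sub_nonneg.2 (hmin kmax))
          hA.ergLambda_nonneg

end RowStochastic

theorem ergDelta_list_prod_le :
    ∀ l : List (Matrix (Fin m) (Fin m) ℝ), (∀ A ∈ l, RowStochastic A) →
      ergDelta l.prod ≤ (l.map ergLambda).prod
  | [], _ => by simpa using rowStochastic_one.ergDelta_le_one
  | A :: l, hl => by
    have hA := hl A List.mem_cons_self
    rw [List.prod_cons, List.map_cons, List.prod_cons]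
    calc ergDelta (A * l.prod) ≤ ergLambda A * ergDelta l.prod := hA.ergDelta_mul_le _
      _ ≤ ergLambda A * (l.map ergLambda).prod :=
        mul_le_mul_of_nonneg_left
          (ergDelta_list_prod_le l fun B hB => hl B (List.mem_cons_of_mem A hB))
          hA.ergLambda_nonneg

end

theorem ergDelta_prod_le_general {m p : ℕ} (Q : Fin p → Matrix (Fin m) (Fin m) ℝ)
    (hQ : ∀ k, RowStochastic (Q k)) :
    ergDelta (List.ofFn Q).prod ≤ ∏ k, ergLambda (Q k) := by
  simpa [List.map_ofFn, List.prod_ofFn] using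
    ergDelta_list_prod_le (List.ofFn Q) (by simpa [List.forall_mem_ofFn_iff] using hQ)

/-- Hajnal's inequality: for a finite sequence of row-stochastic matrices
`Q 0, ..., Q (p-1)`, the ergodic coefficient of their (ordered) product is at most
the product of their `lambda` coefficients. -/
theorem ergDelta_prod_le {m p : ℕ} (hm : 0 < m) (Q : Fin p → Matrix (Fin m) (Fin m) ℝ)
    (hQ : ∀ k, RowStochastic (Q k)) :
    ergDelta (List.ofFn Q).prod ≤ ∏ k, ergLambda (Q k) :=
  ergDelta_prod_le_general Q hQ
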